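/- arXiv:2408.00227 — 5 statements merged into one kernel-verified Lean document; each statement's English description precedes it below -/
import Mathlib

section
/- Let c be a Monge edge-length function on the complete DAG on {s,...,N}. Let P = (u_0,...,u_{m₁}) and Q = (v_0,...,v_{m₂}) be paths with 1 ≤ m₁ ≤ m₂, u_0 ≤ v_0 < v_{m₂} ≤ u_{m₁}, and let m ∈ [m₁, m₂]. Define k as the least index in [1, m₁] with u_k ≥ v_{m-m₁+k}, and form the swapped paths Q⊕_m P = (v_0,...,v_{m-m₁+k-1}, u_k,...,u_{m₁}) and Q⊖_m P = (u_0,...,u_{k-1}, v_{m-m₁+k},...,v_{m₂}). Then Q⊕_m P is an m-link path from v_0 to u_{m₁}, Q⊖_m P is an (m₁+m₂-m)-link path from u_0 to v_{m₂}, and c(P) + c(Q) ≥ c(Q⊕_m P) + c(Q⊖_m P). -/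
/-- A Monge (submodular) edge-length function on the complete DAG on `{s,...,N}`. -/
def IsMonge (s N : ℕ) (c : ℕ → ℕ → ℝ) : Prop :=
  ∀ i₁ i₂ j₂ j₁ : ℕ, s ≤ i₁ → i₁ < i₂ → i₂ < j₂ → j₂ < j₁ → j₁ ≤ N →
    c i₁ j₂ + c i₂ j₁ ≤ c i₁ j₁ + c i₂ j₂

/-- `v 0, v 1, ..., v m` is an `m`-link path from `a` to `b` inside `{s,...,N}`. -/
def IsPath (s N a b m : ℕ) (v : ℕ → ℕ) : Prop :=
  v 0 = a ∧ v m = b ∧ (∀ k < m, v k < v (k + 1)) ∧ s ≤ a ∧ b ≤ N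

/-- The length of the `m`-link path `v 0, ..., v m` under edge lengths `c`. -/
def pathLen (c : ℕ → ℕ → ℝ) (m : ℕ) (v : ℕ → ℕ) : ℝ :=
  ∑ k ∈ Finset.range m, c (v k) (v (k + 1))

/-- The set of lengths of `m`-link `a`-`b` paths in the complete DAG on `{s,...,N}`. -/
def pathLens (s N a b m : ℕ) (c : ℕ → ℕ → ℝ) : Set ℝ :=
  {x | ∃ v, IsPath s N a b m v ∧ pathLen c m v = x}

/-- The set of link counts of shortest `s`-`n` paths in `G(lam)`
    (the graph with `lam` subtracted from every edge length). -/
def DSet (s N n : ℕ) (c : ℕ → ℕ → ℝ) (lam : ℝ) : Set ℕ :=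
  {m | ∃ v, IsPath s N s n m v ∧
    ∀ m' w, IsPath s N s n m' w →
      pathLen c m v - m * lam ≤ pathLen c m' w - m' * lam}

/-- The set of lengths of all `s`-`n` paths (any number of links). -/
def allLens (s N n : ℕ) (c : ℕ → ℕ → ℝ) : Set ℝ :=
  {x | ∃ m v, IsPath s N s n m v ∧ pathLen c m v = x}

/-! Both swapped paths are splices: a prefix of one path followed by a suffix of the other,
joined by one new edge. Choosing `k` minimal makes the two new edges cross, i.e.
`u (k-1) ≤ v (K-1) < v K ≤ u k` with `K = m - m₁ + k`, so the Monge inequality bounds the two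
new edges by the two old edges they replace, while all other edges are shared. -/

lemma IsMonge.exchange_le {s N : ℕ} {c : ℕ → ℕ → ℝ} (hc : IsMonge s N c)
    {i₁ i₂ j₂ j₁ : ℕ} (hs : s ≤ i₁) (hi : i₁ ≤ i₂) (hij : i₂ < j₂) (hj : j₂ ≤ j₁) (hN : j₁ ≤ N) :
    c i₁ j₂ + c i₂ j₁ ≤ c i₁ j₁ + c i₂ j₂ := by
  rcases hi.eq_or_lt with rfl | hi
  · rw [add_comm]
  rcases hj.eq_or_lt with rfl | hj
  · rfl
  exact hc i₁ i₂ j₂ j₁ hs hi hij hj hN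

section steps

variable {v : ℕ → ℕ} {n : ℕ}

lemma apply_le_apply_of_lt_succ (h : ∀ k < n, v k < v (k + 1)) {i j : ℕ} (hij : i ≤ j)
    (hjn : j ≤ n) : v i ≤ v j :=
  (strictMonoOn_Iic_of_lt_succ (by simpa only [Order.succ_eq_add_one] using h)).monotoneOn
    (hij.trans hjn) hjn hij

lemma apply_pred_lt_apply (h : ∀ k < n, v k < v (k + 1)) {a : ℕ} (ha : 0 < a) (han : a ≤ n) :
    v (a - 1) < v a := by
  simpa only [Nat.sub_add_cancel ha] using h (a - 1) (by omega)

end steps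

lemma pathLen_congr (c : ℕ → ℕ → ℝ) {n : ℕ} {f g : ℕ → ℕ} (h : ∀ i ≤ n, f i = g i) :
    pathLen c n f = pathLen c n g :=
  Finset.sum_congr rfl fun i hi => by
    rw [Finset.mem_range] at hi
    rw [h i hi.le, h (i + 1) hi]

lemma pathLen_eq_add_add (c : ℕ → ℕ → ℝ) (f : ℕ → ℕ) {a n : ℕ} (ha : 0 < a) (han : a ≤ n) :
    pathLen c n f =
      pathLen c (a - 1) f + c (f (a - 1)) (f a) + pathLen c (n - a) (fun i => f (a + i)) := by
  obtain ⟨a, rfl⟩ := Nat.exists_eq_add_of_lt ha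
  obtain ⟨b, rfl⟩ := Nat.exists_eq_add_of_le han
  simp only [pathLen, Nat.add_sub_cancel, Nat.add_sub_cancel_left, zero_add, ← add_assoc]
  rw [Finset.sum_range_add, Finset.sum_range_succ]

def splice (v w : ℕ → ℕ) (a b : ℕ) : ℕ → ℕ :=
  fun i => if i < a then v i else w (i + b - a)

section splice

variable {v w : ℕ → ℕ} {a b q : ℕ}

lemma isPath_splice {s N : ℕ} (ha : 0 < a) (hbq : b ≤ q)
    (hv : ∀ i, i + 1 < a → v i < v (i + 1)) (hjump : v (a - 1) < w b)
    (hw : ∀ i < q, w i < w (i + 1)) (hs : s ≤ v 0) (hN : w q ≤ N) :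
    IsPath s N (v 0) (w q) (a + (q - b)) (splice v w a b) := by
  refine ⟨if_pos ha, ?_, fun i hi => ?_, hs, hN⟩
  · simp only [splice, if_neg (show ¬a + (q - b) < a by omega)]
    congr 1
    omega
  · unfold splice
    rcases lt_trichotomy (i + 1) a with h | h | h
    · rw [if_pos (by omega), if_pos h]
      exact hv i h
    · rw [if_pos (by omega), if_neg (by omega), show i = a - 1 by omega,
        show a - 1 + 1 + b - a = b by omega]
      exact hjump
    · rw [if_neg (by omega), if_neg (by omega), show i + 1 + b - a = i + b - a + 1 by omega]
      exact hw _ (by omega)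

lemma pathLen_splice (c : ℕ → ℕ → ℝ) (ha : 0 < a) :
    pathLen c (a + (q - b)) (splice v w a b) =
      pathLen c (a - 1) v + c (v (a - 1)) (w b) + pathLen c (q - b) (fun i => w (b + i)) := by
  rw [pathLen_eq_add_add c _ ha (Nat.le_add_right _ _), Nat.add_sub_cancel_left]
  congr 1
  · congr 1
    · exact pathLen_congr c fun i hi => if_pos (by omega)
    · simp only [splice, if_pos (show a - 1 < a by omega), lt_irrefl, if_false,
        Nat.add_sub_cancel_left]
  · exact pathLen_congr c fun i _ => by
      simp only [splice, if_neg (show ¬a + i < a by omega)]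
      congr 1
      omega

end splice

theorem IsMonge.pathLen_splice_add_splice_le {s N : ℕ} {c : ℕ → ℕ → ℝ} (hc : IsMonge s N c)
    {u v : ℕ → ℕ} {p q a b : ℕ} (hu : ∀ i < p, u i < u (i + 1))
    (hv : ∀ i < q, v i < v (i + 1)) (ha : 0 < a) (haq : a ≤ q) (hb : 0 < b) (hbp : b ≤ p)
    (hs : s ≤ u 0) (hN : u p ≤ N) (hlow : u (b - 1) ≤ v (a - 1)) (hcross : v a ≤ u b) :
    pathLen c (a + (p - b)) (splice v u a b) + pathLen c (b + (q - a)) (splice u v b a) ≤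
      pathLen c p u + pathLen c q v := by
  have hexch : c (u (b - 1)) (v a) + c (v (a - 1)) (u b) ≤
      c (u (b - 1)) (u b) + c (v (a - 1)) (v a) :=
    hc.exchange_le (hs.trans (apply_le_apply_of_lt_succ hu (Nat.zero_le _) (by omega))) hlow
      (apply_pred_lt_apply hv ha haq) hcross ((apply_le_apply_of_lt_succ hu hbp le_rfl).trans hN)
  rw [pathLen_splice c ha, pathLen_splice c hb, pathLen_eq_add_add c u hb hbp,
    pathLen_eq_add_add c v ha haq]
  linarith

theorem stmt3_general (s N : ℕ) (c : ℕ → ℕ → ℝ) (hc : IsMonge s N c)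
    (u v : ℕ → ℕ) (m₁ m₂ m k : ℕ)
    (hmlo : m₁ ≤ m) (hmhi : m ≤ m₂)
    (hP : IsPath s N (u 0) (u m₁) m₁ u) (hQ : IsPath s N (v 0) (v m₂) m₂ v)
    (h0 : u 0 ≤ v 0)
    (hk : IsLeast {k | 1 ≤ k ∧ k ≤ m₁ ∧ v (m - m₁ + k) ≤ u k} k) :
    IsPath s N (v 0) (u m₁) m
      (fun i => if i < m - m₁ + k then v i else u (i - (m - m₁))) ∧
    IsPath s N (u 0) (v m₂) (m₁ + m₂ - m)
      (fun i => if i < k then u i else v (i + (m - m₁))) ∧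
    pathLen c m (fun i => if i < m - m₁ + k then v i else u (i - (m - m₁))) +
      pathLen c (m₁ + m₂ - m) (fun i => if i < k then u i else v (i + (m - m₁)))
      ≤ pathLen c m₁ u + pathLen c m₂ v := by
  obtain ⟨-, -, hu, hsu, huN⟩ := hP
  obtain ⟨-, -, hv, hsv, hvN⟩ := hQ
  obtain ⟨⟨hk1, hkm₁, hcross⟩, hkmin⟩ := hk
  obtain ⟨K, hK⟩ : ∃ K, K = m - m₁ + k := ⟨_, rfl⟩
  rw [← hK] at hcross
  have hvK : v (K - 1) < v K := apply_pred_lt_apply hv (by omega) (by omega)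
  have hlow : u (k - 1) ≤ v (K - 1) := by
    rcases hk1.eq_or_lt with rfl | hk2
    · exact h0.trans (apply_le_apply_of_lt_succ hv (Nat.zero_le _) (by omega))
    · by_contra! hlt
      have := hkmin ⟨by omega, by omega, (show m - m₁ + (k - 1) = K - 1 by omega) ▸ hlt.le⟩
      omega
  have hQP : (fun i => if i < m - m₁ + k then v i else u (i - (m - m₁))) = splice v u K k := by
    funext i; simp only [splice, ← hK]; split_ifs <;> first | rfl | (congr 1; omega)
  have hUV : (fun i => if i < k then u i else v (i + (m - m₁))) = splice u v k K := by
    funext i; simp only [splice]; split_ifs <;> first | rfl | (congr 1; omega)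
  rw [hQP, hUV, show m₁ + m₂ - m = k + (m₂ - K) by omega, show m = K + (m₁ - k) by omega]
  exact ⟨isPath_splice (by omega) hkm₁ (fun i _ => hv i (by omega)) (hvK.trans_le hcross) hu hsv
      huN,
    isPath_splice (by omega) (by omega) (fun i _ => hu i (by omega)) (hlow.trans_lt hvK) hv hsu
      hvN,
    hc.pathLen_splice_add_splice_le hu hv (by omega) (by omega) (by omega) hkm₁ hsu huN hlow
      hcross⟩

/-- Path swapping: `Q ⊕ₘ P` is an `m`-link `v 0`-`u m₁` path, `Q ⊖ₘ P` is an
`(m₁+m₂-m)`-link `u 0`-`v m₂` path, and the sum of their lengths is at most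
`c(P) + c(Q)`. -/
theorem stmt3 (s N : ℕ) (c : ℕ → ℕ → ℝ) (hc : IsMonge s N c)
    (u v : ℕ → ℕ) (m₁ m₂ m k : ℕ)
    (h1 : 1 ≤ m₁) (h12 : m₁ ≤ m₂) (hmlo : m₁ ≤ m) (hmhi : m ≤ m₂)
    (hP : IsPath s N (u 0) (u m₁) m₁ u) (hQ : IsPath s N (v 0) (v m₂) m₂ v)
    (h0 : u 0 ≤ v 0) (hne : v 0 < v m₂) (hend : v m₂ ≤ u m₁)
    (hk : IsLeast {k | 1 ≤ k ∧ k ≤ m₁ ∧ v (m - m₁ + k) ≤ u k} k) :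
    IsPath s N (v 0) (u m₁) m
      (fun i => if i < m - m₁ + k then v i else u (i - (m - m₁))) ∧
    IsPath s N (u 0) (v m₂) (m₁ + m₂ - m)
      (fun i => if i < k then u i else v (i + (m - m₁))) ∧
    pathLen c m (fun i => if i < m - m₁ + k then v i else u (i - (m - m₁))) +
      pathLen c (m₁ + m₂ - m) (fun i => if i < k then u i else v (i + (m - m₁)))
      ≤ pathLen c m₁ u + pathLen c m₂ v :=
  stmt3_general s N c hc u v m₁ m₂ m k hmlo hmhi hP hQ h0 hk
end

section
/- Let G be a Monge DAG on {s,...,N} with edge lengths c, and let F(i) be the shortest-path distance from s to i. For n ∈ {s+1,...,N} let π_min(n) (resp. π_max(n)) be the least (resp. greatest) minimizer i ∈ [s, n-1] of F(i) + c(i,n). Then π_min and π_max are nondecreasing in n. -/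
def minimizers (g : ℕ → ℕ → ℝ) (s n : ℕ) : Set ℕ :=
  {i | s ≤ i ∧ i < n ∧ ∀ i', s ≤ i' → i' < n → g i n ≤ g i' n}

namespace IsMonge

variable {s N : ℕ} {g : ℕ → ℕ → ℝ}

theorem add_left {c : ℕ → ℕ → ℝ} (hc : IsMonge s N c) (F : ℕ → ℝ) :
    IsMonge s N (fun i n => F i + c i n) := by
  intro i₁ i₂ j₂ j₁ hs h₁₂ h₂₂ h₂₁ hN
  linarith [hc i₁ i₂ j₂ j₁ hs h₁₂ h₂₂ h₂₁ hN]

/-- Crossing minimizers can be exchanged: Monge forces both minimality inequalities to be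
equalities. -/
theorem minimizers_exchange (hg : IsMonge s N g) {a b n₁ n₂ : ℕ} (hba : b < a)
    (hn : n₁ < n₂) (hN : n₂ ≤ N) (ha : a ∈ minimizers g s n₁) (hb : b ∈ minimizers g s n₂) :
    b ∈ minimizers g s n₁ ∧ a ∈ minimizers g s n₂ := by
  obtain ⟨has, han, ha_min⟩ := ha
  obtain ⟨hbs, -, hb_min⟩ := hb
  have hmonge := hg b a n₁ n₂ hbs hba han hn hN
  have h₁ := ha_min b hbs (hba.trans han)
  have h₂ := hb_min a has (han.trans hn)
  refine ⟨⟨hbs, hba.trans han, fun i hi hin => ?_⟩,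
    ⟨has, han.trans hn, fun i hi hin => ?_⟩⟩
  · linarith [ha_min i hi hin]
  · linarith [hb_min i hi hin]

theorem isLeast_minimizers_mono (hg : IsMonge s N g) {n₁ n₂ p₁ p₂ : ℕ} (hn : n₁ ≤ n₂)
    (hN : n₂ ≤ N) (hp₁ : IsLeast (minimizers g s n₁) p₁)
    (hp₂ : IsLeast (minimizers g s n₂) p₂) : p₁ ≤ p₂ := by
  rcases hn.eq_or_lt with rfl | hn
  · exact (hp₁.unique hp₂).le
  by_contra! hp
  exact hp.not_ge (hp₁.2 (hg.minimizers_exchange hp hn hN hp₁.1 hp₂.1).1)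

theorem isGreatest_minimizers_mono (hg : IsMonge s N g) {n₁ n₂ p₁ p₂ : ℕ} (hn : n₁ ≤ n₂)
    (hN : n₂ ≤ N) (hp₁ : IsGreatest (minimizers g s n₁) p₁)
    (hp₂ : IsGreatest (minimizers g s n₂) p₂) : p₁ ≤ p₂ := by
  rcases hn.eq_or_lt with rfl | hn
  · exact (hp₁.unique hp₂).le
  by_contra! hp
  exact hp.not_ge (hp₂.2 (hg.minimizers_exchange hp hn hN hp₁.1 hp₂.1).2)

end IsMonge

theorem stmt7_general (s N : ℕ) (c : ℕ → ℕ → ℝ) (hc : IsMonge s N c) (F : ℕ → ℝ)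
    (pmin pmax : ℕ → ℕ)
    (hpmin : ∀ n, s + 1 ≤ n → n ≤ N →
      IsLeast {i | s ≤ i ∧ i < n ∧
        ∀ i', s ≤ i' → i' < n → F i + c i n ≤ F i' + c i' n} (pmin n))
    (hpmax : ∀ n, s + 1 ≤ n → n ≤ N →
      IsGreatest {i | s ≤ i ∧ i < n ∧
        ∀ i', s ≤ i' → i' < n → F i + c i n ≤ F i' + c i' n} (pmax n)) :
    ∀ n₁ n₂, s + 1 ≤ n₁ → n₁ ≤ n₂ → n₂ ≤ N →
      pmin n₁ ≤ pmin n₂ ∧ pmax n₁ ≤ pmax n₂ := by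
  intro n₁ n₂ hn₁ hn hN
  have hg := hc.add_left F
  have hn₂ : s + 1 ≤ n₂ := hn₁.trans hn
  have hN₁ : n₁ ≤ N := hn.trans hN
  exact ⟨hg.isLeast_minimizers_mono hn hN (hpmin n₁ hn₁ hN₁) (hpmin n₂ hn₂ hN),
    hg.isGreatest_minimizers_mono hn hN (hpmax n₁ hn₁ hN₁) (hpmax n₂ hn₂ hN)⟩

/-- The least and greatest minimizers of `F(i) + c(i,n)` are nondecreasing in `n`. -/
theorem stmt7 (s N : ℕ) (c : ℕ → ℕ → ℝ) (hc : IsMonge s N c) (F : ℕ → ℝ)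
    (hF : ∀ n, s ≤ n → n ≤ N → IsLeast (allLens s N n c) (F n))
    (pmin pmax : ℕ → ℕ)
    (hpmin : ∀ n, s + 1 ≤ n → n ≤ N →
      IsLeast {i | s ≤ i ∧ i < n ∧
        ∀ i', s ≤ i' → i' < n → F i + c i n ≤ F i' + c i' n} (pmin n))
    (hpmax : ∀ n, s + 1 ≤ n → n ≤ N →
      IsGreatest {i | s ≤ i ∧ i < n ∧
        ∀ i', s ≤ i' → i' < n → F i + c i n ≤ F i' + c i' n} (pmax n)) :
    ∀ n₁ n₂, s + 1 ≤ n₁ → n₁ ≤ n₂ → n₂ ≤ N →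
      pmin n₁ ≤ pmin n₂ ∧ pmax n₁ ≤ pmax n₂ :=
  stmt7_general s N c hc F pmin pmax hpmin hpmax
end

section
/- Let G be a Monge DAG on {s,...,N}. All nodes at the same depth in the minimal shortest-path tree T_min form a consecutive interval of integers; likewise for the maximal shortest-path tree T_max. -/
def optParents (s : ℕ) (c : ℕ → ℕ → ℝ) (F : ℕ → ℝ) (n : ℕ) : Set ℕ :=
  {i | s ≤ i ∧ i < n ∧ ∀ i', s ≤ i' → i' < n → F i + c i n ≤ F i' + c i' n}

namespace IsMonge

variable {s N : ℕ} {c : ℕ → ℕ → ℝ} {F : ℕ → ℝ}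

theorem mem_optParents_exchange (hc : IsMonge s N c) {i₁ i₂ a b : ℕ}
    (h₂ : i₂ ∈ optParents s c F a) (h₁ : i₁ ∈ optParents s c F b)
    (hi : i₁ < i₂) (hab : a < b) (hb : b ≤ N) :
    i₁ ∈ optParents s c F a ∧ i₂ ∈ optParents s c F b := by
  obtain ⟨hs₂, hi₂a, hopt₂⟩ := h₂
  obtain ⟨hs₁, -, hopt₁⟩ := h₁
  have hmonge := hc i₁ i₂ a b hs₁ hi hi₂a hab hb
  have hA := hopt₂ i₁ hs₁ (hi.trans hi₂a)
  have hB := hopt₁ i₂ hs₂ (hi₂a.trans hab)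
  refine ⟨⟨hs₁, hi.trans hi₂a, fun i' hs' hi' => ?_⟩,
    ⟨hs₂, hi₂a.trans hab, fun i' hs' hi' => ?_⟩⟩
  · linarith [hopt₂ i' hs' hi']
  · linarith [hopt₁ i' hs' hi']

theorem monotoneOn_least_optParent (hc : IsMonge s N c) {p : ℕ → ℕ}
    (hp : ∀ n, s + 1 ≤ n → n ≤ N → IsLeast (optParents s c F n) (p n)) :
    MonotoneOn p (Set.Icc (s + 1) N) := by
  intro a ⟨ha, _⟩ b ⟨_, hb⟩ hab
  rcases hab.eq_or_lt with rfl | hab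
  · exact le_rfl
  by_contra! hlt
  have hpa := hp a ha (hab.le.trans hb)
  have hpb := hp b (ha.trans hab.le) hb
  have hpb_opt_a := (hc.mem_optParents_exchange hpa.1 hpb.1 hlt hab hb).1
  exact (hpa.2 hpb_opt_a).not_gt hlt

theorem monotoneOn_greatest_optParent (hc : IsMonge s N c) {p : ℕ → ℕ}
    (hp : ∀ n, s + 1 ≤ n → n ≤ N → IsGreatest (optParents s c F n) (p n)) :
    MonotoneOn p (Set.Icc (s + 1) N) := by
  intro a ⟨ha, _⟩ b ⟨_, hb⟩ hab
  rcases hab.eq_or_lt with rfl | hab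
  · exact le_rfl
  by_contra! hlt
  have hpa := hp a ha (hab.le.trans hb)
  have hpb := hp b (ha.trans hab.le) hb
  have hpa_opt_b := (hc.mem_optParents_exchange hpa.1 hpb.1 hlt hab hb).2
  exact (hpb.2 hpa_opt_b).not_gt hlt

end IsMonge

theorem monotoneOn_depth_of_monotoneOn_parent {s N : ℕ} {p dep : ℕ → ℕ}
    (hp_lt : ∀ n, s + 1 ≤ n → n ≤ N → s ≤ p n ∧ p n < n)
    (hp_mono : MonotoneOn p (Set.Icc (s + 1) N))
    (hdep₀ : dep s = 0) (hdep : ∀ n, s + 1 ≤ n → n ≤ N → dep n = dep (p n) + 1) :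
    MonotoneOn dep (Set.Icc s N) := by
  suffices h : ∀ b, b ≤ N → ∀ a, s ≤ a → a ≤ b → dep a ≤ dep b from
    fun a ha b hb hab => h b hb.2 a ha.1 hab
  intro b
  induction b using Nat.strong_induction_on with
  | _ b ih =>
    intro hb a hsa hab
    rcases hab.eq_or_lt with rfl | hab
    · exact le_rfl
    rcases hsa.eq_or_lt with rfl | hsa
    · exact hdep₀ ▸ Nat.zero_le _
    obtain ⟨-, hpb⟩ := hp_lt b (by omega) hb
    obtain ⟨hspa, -⟩ := hp_lt a hsa (by omega)
    have hpab : p a ≤ p b := hp_mono ⟨hsa, by omega⟩ ⟨by omega, hb⟩ hab.le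
    rw [hdep a hsa (by omega), hdep b (by omega) hb]
    exact Nat.succ_le_succ (ih (p b) hpb (by omega) (p a) hspa hpab)

theorem MonotoneOn.eq_of_eq_of_le_of_le {α β : Type*} [Preorder α] [PartialOrder β]
    {f : α → β} {S : Set α} (hf : MonotoneOn f S) {a b c : α} (ha : a ∈ S) (hb : b ∈ S)
    (hc : c ∈ S) (hab : a ≤ b) (hbc : b ≤ c) (hfac : f a = f c) : f b = f a :=
  le_antisymm (hfac ▸ hf hb hc hbc) (hf ha hb hab)

theorem stmt9_general (s N : ℕ) (c : ℕ → ℕ → ℝ) (hc : IsMonge s N c) (F : ℕ → ℝ)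
    (pmin pmax depmin depmax : ℕ → ℕ)
    (hpmin : ∀ n, s + 1 ≤ n → n ≤ N →
      IsLeast {i | s ≤ i ∧ i < n ∧
        ∀ i', s ≤ i' → i' < n → F i + c i n ≤ F i' + c i' n} (pmin n))
    (hpmax : ∀ n, s + 1 ≤ n → n ≤ N →
      IsGreatest {i | s ≤ i ∧ i < n ∧
        ∀ i', s ≤ i' → i' < n → F i + c i n ≤ F i' + c i' n} (pmax n))
    (hdepmin0 : depmin s = 0)
    (hdepmin : ∀ n, s + 1 ≤ n → n ≤ N → depmin n = depmin (pmin n) + 1)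
    (hdepmax0 : depmax s = 0)
    (hdepmax : ∀ n, s + 1 ≤ n → n ≤ N → depmax n = depmax (pmax n) + 1) :
    ∀ n₁ n₂ n₃, s ≤ n₁ → n₁ ≤ n₂ → n₂ ≤ n₃ → n₃ ≤ N →
      (depmin n₁ = depmin n₃ → depmin n₂ = depmin n₁) ∧
      (depmax n₁ = depmax n₃ → depmax n₂ = depmax n₁) := by
  have depmin_mono : MonotoneOn depmin (Set.Icc s N) :=
    monotoneOn_depth_of_monotoneOn_parent
      (fun n h₁ h₂ => ⟨(hpmin n h₁ h₂).1.1, (hpmin n h₁ h₂).1.2.1⟩)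
      (hc.monotoneOn_least_optParent hpmin) hdepmin0 hdepmin
  have depmax_mono : MonotoneOn depmax (Set.Icc s N) :=
    monotoneOn_depth_of_monotoneOn_parent
      (fun n h₁ h₂ => ⟨(hpmax n h₁ h₂).1.1, (hpmax n h₁ h₂).1.2.1⟩)
      (hc.monotoneOn_greatest_optParent hpmax) hdepmax0 hdepmax
  intro n₁ n₂ n₃ h₁ h₁₂ h₂₃ h₃
  have hn₁ : n₁ ∈ Set.Icc s N := ⟨h₁, by omega⟩
  have hn₂ : n₂ ∈ Set.Icc s N := ⟨by omega, by omega⟩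
  have hn₃ : n₃ ∈ Set.Icc s N := ⟨by omega, h₃⟩
  exact ⟨depmin_mono.eq_of_eq_of_le_of_le hn₁ hn₂ hn₃ h₁₂ h₂₃,
    depmax_mono.eq_of_eq_of_le_of_le hn₁ hn₂ hn₃ h₁₂ h₂₃⟩

/-- Nodes of equal depth in the minimal (resp. maximal) shortest-path tree form a
consecutive interval of integers. -/
theorem stmt9 (s N : ℕ) (c : ℕ → ℕ → ℝ) (hc : IsMonge s N c) (F : ℕ → ℝ)
    (hF : ∀ n, s ≤ n → n ≤ N → IsLeast (allLens s N n c) (F n))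
    (pmin pmax depmin depmax : ℕ → ℕ)
    (hpmin : ∀ n, s + 1 ≤ n → n ≤ N →
      IsLeast {i | s ≤ i ∧ i < n ∧
        ∀ i', s ≤ i' → i' < n → F i + c i n ≤ F i' + c i' n} (pmin n))
    (hpmax : ∀ n, s + 1 ≤ n → n ≤ N →
      IsGreatest {i | s ≤ i ∧ i < n ∧
        ∀ i', s ≤ i' → i' < n → F i + c i n ≤ F i' + c i' n} (pmax n))
    (hdepmin0 : depmin s = 0)
    (hdepmin : ∀ n, s + 1 ≤ n → n ≤ N → depmin n = depmin (pmin n) + 1)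
    (hdepmax0 : depmax s = 0)
    (hdepmax : ∀ n, s + 1 ≤ n → n ≤ N → depmax n = depmax (pmax n) + 1) :
    ∀ n₁ n₂ n₃, s ≤ n₁ → n₁ ≤ n₂ → n₂ ≤ n₃ → n₃ ≤ N →
      (depmin n₁ = depmin n₃ → depmin n₂ = depmin n₁) ∧
      (depmax n₁ = depmax n₃ → depmax n₂ = depmax n₁) :=
  stmt9_general s N c hc F pmin pmax depmin depmax hpmin hpmax hdepmin0 hdepmin hdepmax0 hdepmax
end

section
/- Let G be a Monge DAG on {s,...,N}, 1 ≤ m ≤ M ≤ N-s-1, and let (v_0,...,v_{M+1}) be a shortest (M+1)-link s-N path. Then s+m+1 ≤ v_{m+1} ≤ N-M+m and δ(m, v_{m+1}) ≤ δ(M, N), where δ(k,j) = f(k+1,j) - f(k,j). -/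
lemma IsPath.add_le {s N a b n : ℕ} {v : ℕ → ℕ} (hv : IsPath s N a b n v) {i k : ℕ}
    (hik : i + k ≤ n) : v i + k ≤ v (i + k) := by
  induction k with
  | zero => rfl
  | succ k ih =>
    have := hv.2.2.1 (i + k) (by omega)
    have := ih (by omega)
    rw [← add_assoc i k 1]
    omega

lemma IsPath.links_le {s N a b n : ℕ} {v : ℕ → ℕ} (hv : IsPath s N a b n v) : a + n ≤ b := by
  simpa [hv.1, hv.2.1] using hv.add_le (i := 0) (k := n) (by omega)

lemma IsPath.prefix {s N a b i d : ℕ} {v : ℕ → ℕ} (hv : IsPath s N a b (i + d) v) :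
    IsPath s N a (v i) i v := by
  obtain ⟨h0, hend, hinc, hs, hN⟩ := hv
  have := IsPath.add_le ⟨h0, hend, hinc, hs, hN⟩ (i := i) (k := d) le_rfl
  exact ⟨h0, rfl, fun k hk => hinc k (by omega), hs, by omega⟩

lemma IsPath.suffix {s N a b i d : ℕ} {v : ℕ → ℕ} (hv : IsPath s N a b (i + d) v) :
    IsPath s N (v i) b d (fun k => v (i + k)) := by
  obtain ⟨h0, hend, hinc, hs, hN⟩ := hv
  have := IsPath.add_le ⟨h0, hend, hinc, hs, hN⟩ (i := 0) (k := i) (by omega)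
  rw [zero_add] at this
  exact ⟨rfl, hend, fun k hk => hinc (i + k) (by omega), by omega, hN⟩

lemma pathLen_add (c : ℕ → ℕ → ℝ) (i d : ℕ) (v : ℕ → ℕ) :
    pathLen c (i + d) v = pathLen c i v + pathLen c d (fun k => v (i + k)) := by
  simp only [pathLen, Finset.sum_range_add, add_assoc]

def pathAppend (p : ℕ → ℕ) (m : ℕ) (q : ℕ → ℕ) : ℕ → ℕ :=
  fun k => if k ≤ m then p k else q (k - m)

lemma pathAppend_of_le {p q : ℕ → ℕ} {m k : ℕ} (hk : k ≤ m) : pathAppend p m q k = p k :=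
  if_pos hk

lemma pathAppend_add {p q : ℕ → ℕ} {m : ℕ} (hpq : p m = q 0) (k : ℕ) :
    pathAppend p m q (m + k) = q k := by
  rcases Nat.eq_zero_or_pos k with rfl | hk
  · simpa [pathAppend] using hpq
  · simp [pathAppend, show ¬ m + k ≤ m by omega]

lemma IsPath.append {s N a b e m n : ℕ} {p q : ℕ → ℕ} (hp : IsPath s N a b m p)
    (hq : IsPath s N b e n q) : IsPath s N a e (m + n) (pathAppend p m q) := by
  obtain ⟨hp0, hpm, hpinc, hs, -⟩ := hp
  obtain ⟨hq0, hqn, hqinc, -, hN⟩ := hq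
  have hpq : p m = q 0 := hpm.trans hq0.symm
  refine ⟨by rw [pathAppend_of_le (Nat.zero_le m), hp0], by rw [pathAppend_add hpq, hqn],
    fun k hk => ?_, hs, hN⟩
  rcases Nat.lt_or_ge k m with hkm | hkm
  · rw [pathAppend_of_le hkm.le, pathAppend_of_le hkm]
    exact hpinc k hkm
  · obtain ⟨j, rfl⟩ := Nat.exists_eq_add_of_le hkm
    rw [pathAppend_add hpq, add_assoc, pathAppend_add hpq]
    exact hqinc j (by omega)

lemma pathLen_append (c : ℕ → ℕ → ℝ) {p q : ℕ → ℕ} {m : ℕ} (hpq : p m = q 0) (n : ℕ) :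
    pathLen c (m + n) (pathAppend p m q) = pathLen c m p + pathLen c n q := by
  rw [pathLen_add]
  congr 1
  · refine Finset.sum_congr rfl fun k hk => ?_
    have hk : k < m := Finset.mem_range.mp hk
    rw [pathAppend_of_le hk.le, pathAppend_of_le hk]
  · simp only [pathLen, pathAppend_add hpq]

theorem stmt14_general (s N m M : ℕ) (c : ℕ → ℕ → ℝ)
    (hm : 1 ≤ m) (hmM : m ≤ M)
    (f : ℕ → ℕ → ℝ)
    (hf : ∀ k j, 1 ≤ k → s + k ≤ j → j ≤ N → IsLeast (pathLens s N s j k c) (f k j))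
    (v : ℕ → ℕ) (hv : IsPath s N s N (M + 1) v)
    (hopt : ∀ w, IsPath s N s N (M + 1) w →
      pathLen c (M + 1) v ≤ pathLen c (M + 1) w) :
    s + m + 1 ≤ v (m + 1) ∧ v (m + 1) + M ≤ N + m ∧
    f (m + 1) (v (m + 1)) - f m (v (m + 1)) ≤ f (M + 1) N - f M N := by
  obtain ⟨d, rfl⟩ := Nat.exists_eq_add_of_le hmM
  rw [add_right_comm m d 1] at hv hopt ⊢
  have hpre := hv.prefix
  have hsuf := hv.suffix
  have hlower := hpre.links_le
  have hvN : v (m + 1) ≤ N := hpre.2.2.2.2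
  have hupper := hsuf.links_le
  refine ⟨hlower, by omega, ?_⟩
  set S := pathLen c d (fun k => v (m + 1 + k))
  have hfv : f (m + 1 + d) N = pathLen c (m + 1 + d) v :=
    (hf _ N (by omega) (by omega) le_rfl).unique
      ⟨⟨v, hv, rfl⟩, fun _ ⟨w, hw, hlen⟩ => hlen ▸ hopt w hw⟩
  have hfpre : f (m + 1) (v (m + 1)) ≤ pathLen c (m + 1) v :=
    (hf _ _ (by omega) hlower hvN).2 ⟨v, hpre, rfl⟩
  obtain ⟨⟨p, hp, hplen⟩, -⟩ := hf m (v (m + 1)) hm (by omega) hvN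
  have hfshort : f (m + d) N ≤ f m (v (m + 1)) + S := by
    have := (hf _ N (by omega) (by omega) le_rfl).2 ⟨_, hp.append hsuf, rfl⟩
    rwa [pathLen_append c hp.2.1 d, hplen] at this
  rw [hfv, pathLen_add]
  linarith

/-- For a shortest `(M+1)`-link `s`-`N` path `v` and `1 ≤ m ≤ M ≤ N-s-1`:
`s+m+1 ≤ v(m+1) ≤ N-M+m` and `δ(m, v(m+1)) ≤ δ(M, N)`. -/
theorem stmt14 (s N m M : ℕ) (c : ℕ → ℕ → ℝ) (hc : IsMonge s N c)
    (hm : 1 ≤ m) (hmM : m ≤ M) (hM : M + s + 1 ≤ N)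
    (f : ℕ → ℕ → ℝ)
    (hf : ∀ k j, 1 ≤ k → s + k ≤ j → j ≤ N → IsLeast (pathLens s N s j k c) (f k j))
    (v : ℕ → ℕ) (hv : IsPath s N s N (M + 1) v)
    (hopt : ∀ w, IsPath s N s N (M + 1) w →
      pathLen c (M + 1) v ≤ pathLen c (M + 1) w) :
    s + m + 1 ≤ v (m + 1) ∧ v (m + 1) + M ≤ N + m ∧
    f (m + 1) (v (m + 1)) - f m (v (m + 1)) ≤ f (M + 1) N - f M N :=
  stmt14_general s N m M c hm hmM f hf v hv hopt
end

section
/- Let G be a Monge DAG on {s,...,N}, λ ∈ ℝ, and n ∈ {s+1,...,N}. Suppose P is a shortest s-n path in G(λ) with the least number of links d_min(λ,n), and Q is a shortest s-n path in G(λ) with the greatest number of links d_max(λ,n). Then for every m with d_min(λ,n) ≤ m ≤ d_max(λ,n), the swapped path Q⊕_m P is a shortest s-n path in G(λ) with exactly m links, and it is simultaneously a shortest m-link s-n path in G. -/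
/-!
Write `P = u`, `Q = v` and `a = m - m₁`. Along its first `m₁` links `P` stays below the shifted
path `t ↦ v (a + t)` until index `k`, where it jumps over it:
`u (k-1) ≤ v (a+k-1) < v (a+k) ≤ u k`. Exchanging the two crossing edges turns `P, Q` into the
`m`-link path `Q ⊕ₘ P` (`swapPlus`) and the `(m₁+m₂-m)`-link path `Q ⊖ₘ P` (`swapMinus`), and
the Monge inequality for the crossing edges gives `c(Q ⊕ₘ P) + c(Q ⊖ₘ P) ≤ c(P) + c(Q)`. The
link counts also add up to `m₁ + m₂`, so in `G(λ)` the two new paths together cost no more than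
two optimal paths; neither can beat the optimum, hence both attain it. An optimal path in `G(λ)`
with `m` links is in particular a shortest `m`-link path in `G`.
-/

theorem IsMonge.add_le_add {s N : ℕ} {c : ℕ → ℕ → ℝ} (hc : IsMonge s N c)
    {i₁ i₂ j₂ j₁ : ℕ} (h₁ : s ≤ i₁) (h₁₂ : i₁ ≤ i₂) (h₂ : i₂ < j₂) (h₂₁ : j₂ ≤ j₁)
    (hN : j₁ ≤ N) : c i₁ j₂ + c i₂ j₁ ≤ c i₁ j₁ + c i₂ j₂ := by
  rcases h₁₂.eq_or_lt with rfl | h₁₂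
  · rw [add_comm]
  rcases h₂₁.eq_or_lt with rfl | h₂₁
  · rw [add_comm]
  exact hc i₁ i₂ j₂ j₁ h₁ h₁₂ h₂ h₂₁ hN

namespace IsPath

variable {s N a b m : ℕ} {v : ℕ → ℕ}

theorem strictMonoOn (h : IsPath s N a b m v) : StrictMonoOn v (Set.Iic m) :=
  strictMonoOn_Iic_of_lt_succ h.2.2.1

theorem lt_of_lt (h : IsPath s N a b m v) {i j : ℕ} (hij : i < j) (hj : j ≤ m) : v i < v j :=
  h.strictMonoOn (Set.mem_Iic.2 (hij.le.trans hj)) (Set.mem_Iic.2 hj) hij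

theorem le_of_le (h : IsPath s N a b m v) {i j : ℕ} (hij : i ≤ j) (hj : j ≤ m) : v i ≤ v j :=
  h.strictMonoOn.monotoneOn (Set.mem_Iic.2 (hij.trans hj)) (Set.mem_Iic.2 hj) hij

theorem mem_Icc (h : IsPath s N a b m v) {i : ℕ} (hi : i ≤ m) : v i ∈ Set.Icc s N := by
  have h0 := h.le_of_le i.zero_le hi
  have hm := h.le_of_le hi le_rfl
  obtain ⟨rfl, rfl, -, hs, hN⟩ := h
  exact ⟨hs.trans h0, hm.trans hN⟩

end IsPath

theorem pathLen_add_succ_add (c : ℕ → ℕ → ℝ) (v : ℕ → ℕ) (i r : ℕ) :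
    pathLen c (i + 1 + r) v =
      pathLen c i v + c (v i) (v (i + 1)) + pathLen c r (fun t => v (i + 1 + t)) := by
  simp only [pathLen]
  rw [Finset.sum_range_add, Finset.sum_range_succ]
  simp only [add_assoc]

theorem pathLen_congr_s19 (c : ℕ → ℕ → ℝ) {m : ℕ} {v w : ℕ → ℕ} (h : ∀ i ≤ m, v i = w i) :
    pathLen c m v = pathLen c m w :=
  Finset.sum_congr rfl fun i hi => by
    rw [Finset.mem_range] at hi
    rw [h i hi.le, h (i + 1) hi]

theorem pathLen_splice_s19 (c : ℕ → ℕ → ℝ) {w p q : ℕ → ℕ} {i j r : ℕ}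
    (hp : ∀ t ≤ i, w t = p t) (hq : ∀ t ≤ r, w (i + 1 + t) = q (j + t)) :
    pathLen c (i + 1 + r) w = pathLen c i p + c (p i) (q j) + pathLen c r (fun t => q (j + t)) := by
  have hcross : w (i + 1) = q j := by simpa using hq 0 r.zero_le
  rw [pathLen_add_succ_add, pathLen_congr_s19 c hp, hp i le_rfl, hcross, pathLen_congr_s19 c hq]

def swapPlus (u v : ℕ → ℕ) (m₁ m k : ℕ) : ℕ → ℕ :=
  fun i => if i < m - m₁ + k then v i else u (i - (m - m₁))

def swapMinus (u v : ℕ → ℕ) (m₁ m k : ℕ) : ℕ → ℕ :=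
  fun i => if i < k then u i else v (i + (m - m₁))

section Swap

variable {s N a b m₁ m₂ m k : ℕ} {u v : ℕ → ℕ}
  (hu : IsPath s N a b m₁ u) (hv : IsPath s N a b m₂ v) (hm : m₁ ≤ m) (hm' : m ≤ m₂)
  (hk : IsLeast {k | 1 ≤ k ∧ k ≤ m₁ ∧ v (m - m₁ + k) ≤ u k} k)
include hu hv hm hm' hk

theorem swap_crossing :
    u (k - 1) ≤ v (m - m₁ + k - 1) ∧ v (m - m₁ + k - 1) < v (m - m₁ + k) ∧
      v (m - m₁ + k) ≤ u k := by
  obtain ⟨⟨hk1, hkm₁, hjump⟩, hleast⟩ := hk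
  refine ⟨?_, hv.lt_of_lt (by omega) (by omega), hjump⟩
  rcases Nat.lt_or_ge 1 k with hk2 | hk2
  · by_contra! hbelow
    have : k ≤ k - 1 :=
      hleast ⟨by omega, by omega, by rw [← Nat.add_sub_assoc hk1]; exact hbelow.le⟩
    omega
  · have hk : k = 1 := by omega
    subst hk
    rw [hu.1, ← hv.1]
    exact hv.le_of_le (Nat.zero_le _) (by omega)

theorem isPath_swapPlus : IsPath s N a b m (swapPlus u v m₁ m k) := by
  obtain ⟨-, hcross, hjump⟩ := swap_crossing hu hv hm hm' hk
  obtain ⟨hk1, hkm₁, -⟩ := hk.1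
  refine ⟨?_, ?_, fun j hj => ?_, hu.2.2.2.1, hu.2.2.2.2⟩
  · simp only [swapPlus, if_pos (show 0 < m - m₁ + k by omega), hv.1]
  · simp only [swapPlus, if_neg (show ¬m < m - m₁ + k by omega),
      show m - (m - m₁) = m₁ by omega, hu.2.1]
  simp only [swapPlus]
  rcases Nat.lt_or_ge (j + 1) (m - m₁ + k) with hj' | hj'
  · rw [if_pos (by omega), if_pos hj']
    exact hv.lt_of_lt (Nat.lt_succ_self j) (by omega)
  rcases hj'.eq_or_lt with hj' | hj'
  · rw [if_pos (by omega), if_neg (by omega), show j + 1 - (m - m₁) = k by omega,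
      show j = m - m₁ + k - 1 by omega]
    exact hcross.trans_le hjump
  · rw [if_neg (by omega), if_neg (by omega), show j + 1 - (m - m₁) = j - (m - m₁) + 1 by omega]
    exact hu.2.2.1 _ (by omega)

theorem isPath_swapMinus : IsPath s N a b (m₁ + m₂ - m) (swapMinus u v m₁ m k) := by
  obtain ⟨hbelow, hcross, -⟩ := swap_crossing hu hv hm hm' hk
  obtain ⟨hk1, hkm₁, -⟩ := hk.1
  refine ⟨?_, ?_, fun j hj => ?_, hu.2.2.2.1, hu.2.2.2.2⟩
  · simp only [swapMinus, if_pos (show 0 < k by omega), hu.1]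
  · simp only [swapMinus, if_neg (show ¬m₁ + m₂ - m < k by omega),
      show m₁ + m₂ - m + (m - m₁) = m₂ by omega, hv.2.1]
  simp only [swapMinus]
  rcases Nat.lt_or_ge (j + 1) k with hj' | hj'
  · rw [if_pos (by omega), if_pos hj']
    exact hu.lt_of_lt (Nat.lt_succ_self j) (by omega)
  rcases hj'.eq_or_lt with hj' | hj'
  · rw [if_pos (by omega), if_neg (by omega), show j + 1 + (m - m₁) = m - m₁ + k by omega,
      show j = k - 1 by omega]
    exact hbelow.trans_lt hcross
  · rw [if_neg (by omega), if_neg (by omega), show j + 1 + (m - m₁) = j + (m - m₁) + 1 by omega]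
    exact hv.2.2.1 _ (by omega)

theorem pathLen_swapPlus_add_swapMinus_le {c : ℕ → ℕ → ℝ} (hc : IsMonge s N c) :
    pathLen c m (swapPlus u v m₁ m k) + pathLen c (m₁ + m₂ - m) (swapMinus u v m₁ m k) ≤
      pathLen c m₁ u + pathLen c m₂ v := by
  obtain ⟨hbelow, hcross, hjump⟩ := swap_crossing hu hv hm hm' hk
  obtain ⟨hk1, hkm₁, -⟩ := hk.1
  obtain ⟨i, rfl⟩ : ∃ i, k = i + 1 := ⟨k - 1, by omega⟩
  set a := m - m₁
  simp only [← add_assoc, Nat.add_sub_cancel] at hbelow hcross hjump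
  have hP : pathLen c m₁ u = pathLen c i u + c (u i) (u (i + 1)) +
      pathLen c (m₁ - (i + 1)) (fun t => u (i + 1 + t)) := by
    rw [← pathLen_add_succ_add, show i + 1 + (m₁ - (i + 1)) = m₁ by omega]
  have hQ : pathLen c m₂ v = pathLen c (a + i) v + c (v (a + i)) (v (a + i + 1)) +
      pathLen c (m₂ - (a + i + 1)) (fun t => v (a + i + 1 + t)) := by
    rw [← pathLen_add_succ_add, show a + i + 1 + (m₂ - (a + i + 1)) = m₂ by omega]
  have hPlus : pathLen c m (swapPlus u v m₁ m (i + 1)) = pathLen c (a + i) v +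
      c (v (a + i)) (u (i + 1)) + pathLen c (m₁ - (i + 1)) (fun t => u (i + 1 + t)) := by
    have := pathLen_splice_s19 c (w := swapPlus u v m₁ m (i + 1)) (i := a + i) (j := i + 1)
      (r := m₁ - (i + 1)) (fun t ht => if_pos (by omega))
      (fun t ht => by simp only [swapPlus]; rw [if_neg (by omega)]; congr 1; omega)
    rwa [show a + i + 1 + (m₁ - (i + 1)) = m by omega] at this
  have hMinus : pathLen c (m₁ + m₂ - m) (swapMinus u v m₁ m (i + 1)) = pathLen c i u +
      c (u i) (v (a + i + 1)) + pathLen c (m₂ - (a + i + 1)) (fun t => v (a + i + 1 + t)) := by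
    have := pathLen_splice_s19 c (w := swapMinus u v m₁ m (i + 1)) (i := i) (j := a + i + 1)
      (r := m₂ - (a + i + 1)) (fun t ht => if_pos (by omega))
      (fun t ht => by simp only [swapMinus]; rw [if_neg (by omega)]; congr 1; omega)
    rwa [show i + 1 + (m₂ - (a + i + 1)) = m₁ + m₂ - m by omega] at this
  have hexchange := hc.add_le_add (hu.mem_Icc (show i ≤ m₁ by omega)).1 hbelow hcross hjump
    (hu.mem_Icc hkm₁).2
  linarith

end Swap

theorem stmt19_general (s N n m₁ m₂ m k : ℕ) (c : ℕ → ℕ → ℝ) (hc : IsMonge s N c)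
    (lam : ℝ)
    (u v : ℕ → ℕ)
    (hu : IsPath s N s n m₁ u) (hv : IsPath s N s n m₂ v)
    (huopt : ∀ m' w, IsPath s N s n m' w →
      pathLen c m₁ u - m₁ * lam ≤ pathLen c m' w - m' * lam)
    (hvopt : ∀ m' w, IsPath s N s n m' w →
      pathLen c m₂ v - m₂ * lam ≤ pathLen c m' w - m' * lam)
    (hm : m₁ ≤ m) (hm' : m ≤ m₂)
    (hk : IsLeast {k | 1 ≤ k ∧ k ≤ m₁ ∧ v (m - m₁ + k) ≤ u k} k) :
    IsPath s N s n m (fun i => if i < m - m₁ + k then v i else u (i - (m - m₁))) ∧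
    (∀ m' w, IsPath s N s n m' w →
      pathLen c m (fun i => if i < m - m₁ + k then v i else u (i - (m - m₁))) - m * lam ≤
        pathLen c m' w - m' * lam) ∧
    (∀ w, IsPath s N s n m w →
      pathLen c m (fun i => if i < m - m₁ + k then v i else u (i - (m - m₁))) ≤
        pathLen c m w) := by
  have hexchange := pathLen_swapPlus_add_swapMinus_le hu hv hm hm' hk hc
  have hminus_ge := huopt _ _ (isPath_swapMinus hu hv hm hm' hk)
  have hu_ge := hvopt _ _ hu
  have hlinks : ((m₁ + m₂ - m : ℕ) : ℝ) * lam = m₁ * lam + m₂ * lam - m * lam := by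
    rw [Nat.cast_sub (by omega), Nat.cast_add]
    ring
  have hplus_opt : ∀ m' w, IsPath s N s n m' w →
      pathLen c m (swapPlus u v m₁ m k) - m * lam ≤ pathLen c m' w - m' * lam :=
    fun m' w hw => le_trans (by linarith) (huopt m' w hw)
  exact ⟨isPath_swapPlus hu hv hm hm' hk, hplus_opt,
    fun w hw => (sub_le_sub_iff_right _).1 (hplus_opt m w hw)⟩

/-- Swapping a shallowest and a deepest shortest `s`-`n` path in `G(lam)` yields,
for any intermediate link count `m`, a shortest `s`-`n` path in `G(lam)` with
exactly `m` links, which is simultaneously a shortest `m`-link `s`-`n` path in `G`. -/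
theorem stmt19 (s N n m₁ m₂ m k : ℕ) (c : ℕ → ℕ → ℝ) (hc : IsMonge s N c)
    (lam : ℝ) (hn1 : s + 1 ≤ n) (hn2 : n ≤ N)
    (u v : ℕ → ℕ)
    (hu : IsPath s N s n m₁ u) (hv : IsPath s N s n m₂ v)
    (huopt : ∀ m' w, IsPath s N s n m' w →
      pathLen c m₁ u - m₁ * lam ≤ pathLen c m' w - m' * lam)
    (hvopt : ∀ m' w, IsPath s N s n m' w →
      pathLen c m₂ v - m₂ * lam ≤ pathLen c m' w - m' * lam)
    (hdmin : IsLeast (DSet s N n c lam) m₁)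
    (hdmax : IsGreatest (DSet s N n c lam) m₂)
    (hm : m₁ ≤ m) (hm' : m ≤ m₂)
    (hk : IsLeast {k | 1 ≤ k ∧ k ≤ m₁ ∧ v (m - m₁ + k) ≤ u k} k) :
    IsPath s N s n m (fun i => if i < m - m₁ + k then v i else u (i - (m - m₁))) ∧
    (∀ m' w, IsPath s N s n m' w →
      pathLen c m (fun i => if i < m - m₁ + k then v i else u (i - (m - m₁))) - m * lam ≤
        pathLen c m' w - m' * lam) ∧
    (∀ w, IsPath s N s n m w →
      pathLen c m (fun i => if i < m - m₁ + k then v i else u (i - (m - m₁))) ≤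
        pathLen c m w) :=
  stmt19_general s N n m₁ m₂ m k c hc lam u v hu hv huopt hvopt hm hm' hk
end
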